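/- Population unbiasedness of the APP score at the true coefficient under debiasing weights: Let (Ω,ℱ,P) be a probability space carrying: a bounded random vector X in ℝ^p with Σ := E[XXᵀ] invertible; positive real random variables T and C with Δ = 1{T ≤ C}, Y = min(T, C), and E[|log T|] < ∞; a measurable G : ℝ × ℝ^p → ℝ with δ ≤ G(T, X) ≤ 1 a.s. (δ > 0) and G(T, X) a version of E[Δ ∣ σ(T, X)]; and a treatment variable A ∈ {0, …, K} independent of X with κ := P(A = a) ∈ (0, 1) for a fixed a. Let β₀ := Σ⁻¹ E[X log T] be the population least-squares coefficient. Define the score ψ(β, f) := (XΔ / G(Y, X)) (log Y − Xᵀβ) + c₁ (1{A = a}/κ) X (f(X) − Xᵀβ) + c₂ (1{A ≠ a}/(1 − κ)) X (f(X) − Xᵀβ). Then for weights with c₁ + c₂ = 0 and for every bounded measurable f : ℝ^p → ℝ, E[ψ(β₀, f)] = 0. -/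

import Mathlib

open MeasureTheory ProbabilityTheory

/-! On `{Δ = 1}` we have `Y = T`, so the IPCW term is `(Δ / G(T, X)) (log T − Xᵀβ₀) X`. Apart
from `Δ`, this is `σ(T, X)`-measurable, and `G(T, X) = E[Δ ∣ T, X]`, so conditioning on `(T, X)`
removes the weight and leaves `E[X (log T − Xᵀβ₀)]`, which vanishes by the normal equations
`Σ β₀ = E[X log T]`. The two prediction terms combine into `w(A) X (f(X) − Xᵀβ₀)` with
`w = c₁/κ` on `{A = a}` and `c₂/(1 − κ)` off it; independence of `A` and `X` factors the mean,
and `E[w(A)] = c₁ + c₂ = 0`. -/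

section

variable {Ω E : Type*} {mΩ : MeasurableSpace Ω} {μ : Measure Ω}
  [NormedAddCommGroup E] [NormedSpace ℝ E]

section LeastSquares

variable {ι : Type*} [Fintype ι] [IsFiniteMeasure μ] {X : Ω → ι → ℝ} {L : Ω → ℝ} {M : ℝ}

theorem integrable_sub_sum_mul_smul (hX : Measurable X) (hXbd : ∀ ω, ‖X ω‖ ≤ M)
    (hL : Integrable L μ) (β : ι → ℝ) :
    Integrable (fun ω => (L ω - ∑ j, X ω j * β j) • X ω) μ := by
  have hXint : Integrable X μ := .of_bound hX.aestronglyMeasurable M (ae_of_all _ hXbd)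
  exact (hL.sub (integrable_finsetSum _ fun j _ => (hXint.eval j).mul_const (β j))).smul_bdd M
    hX.aestronglyMeasurable (ae_of_all _ hXbd)

theorem integral_sub_sum_mul_smul (hX : Measurable X) (hXbd : ∀ ω, ‖X ω‖ ≤ M)
    (hL : Integrable L μ) (β : ι → ℝ) :
    ∫ ω, (L ω - ∑ j, X ω j * β j) • X ω ∂μ
      = (fun i => ∫ ω, X ω i * L ω ∂μ)
        - (Matrix.of fun i j => ∫ ω, X ω i * X ω j ∂μ).mulVec β := by
  have hXi_norm : ∀ i, ∀ᵐ ω ∂μ, ‖X ω i‖ ≤ M :=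
    fun i => ae_of_all _ fun ω => (norm_le_pi_norm (X ω) i).trans (hXbd ω)
  have hXi_meas : ∀ i, AEStronglyMeasurable (fun ω => X ω i) μ :=
    fun i => (measurable_pi_apply i).comp hX |>.aestronglyMeasurable
  have hXiXj : ∀ i j, Integrable (fun ω => X ω i * X ω j) μ := fun i j =>
    (Integrable.of_bound (hXi_meas j) M (hXi_norm j)).bdd_mul (hXi_meas i) (hXi_norm i)
  funext i
  rw [eval_integral (integrable_sub_sum_mul_smul hX hXbd hL β).eval i]
  calc ∫ ω, ((L ω - ∑ j, X ω j * β j) • X ω) i ∂μ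
      = ∫ ω, (X ω i * L ω - ∑ j, X ω i * X ω j * β j) ∂μ := by
        congr 1 with ω
        simp only [Pi.smul_apply, smul_eq_mul, sub_mul, Finset.sum_mul]
        ring_nf
    _ = _ := by
        rw [integral_sub (hL.bdd_mul (hXi_meas i) (hXi_norm i))
          (integrable_finsetSum _ fun j _ => (hXiXj i j).mul_const _),
          integral_finsetSum _ fun j _ => (hXiXj i j).mul_const _]
        simp only [integral_mul_const, Pi.sub_apply, Matrix.mulVec, dotProduct, Matrix.of_apply]

theorem integral_sub_sum_mul_smul_eq_zero [DecidableEq ι] (hX : Measurable X)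
    (hXbd : ∀ ω, ‖X ω‖ ≤ M) (hL : Integrable L μ) {S : Matrix ι ι ℝ}
    (hS : ∀ i j, S i j = ∫ ω, X ω i * X ω j ∂μ) (hSinv : IsUnit S) {v : ι → ℝ}
    (hv : ∀ i, v i = ∫ ω, X ω i * L ω ∂μ) :
    ∫ ω, (L ω - ∑ j, X ω j * (S⁻¹.mulVec v) j) • X ω ∂μ = 0 := by
  have hS_of : (Matrix.of fun i j => ∫ ω, X ω i * X ω j ∂μ) = S :=
    Matrix.ext fun i j => (hS i j).symm
  rw [integral_sub_sum_mul_smul hX hXbd hL, hS_of, ← funext hv, Matrix.mulVec_mulVec,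
    Matrix.mul_nonsing_inv _ ((Matrix.isUnit_iff_isUnit_det S).mp hSinv), Matrix.one_mulVec,
    sub_self]

end LeastSquares

theorem integral_div_smul_eq_of_condExp_comap [CompleteSpace E] [IsFiniteMeasure μ]
    {β : Type*} [MeasurableSpace β] {Z : Ω → β} {Δ : Ω → ℝ} {G : β → ℝ} {h : β → E}
    (hZ : Measurable Z) (hG : Measurable G) (hh : StronglyMeasurable h) (hΔ : Integrable Δ μ)
    (hGΔ : (fun ω => G (Z ω)) =ᵐ[μ] μ[Δ | MeasurableSpace.comap Z inferInstance])
    (hG0 : ∀ᵐ ω ∂μ, G (Z ω) ≠ 0)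
    (hint : Integrable (fun ω => (Δ ω / G (Z ω)) • h (Z ω)) μ) :
    ∫ ω, (Δ ω / G (Z ω)) • h (Z ω) ∂μ = ∫ ω, h (Z ω) ∂μ := by
  set m := MeasurableSpace.comap Z inferInstance
  have hm : m ≤ mΩ := hZ.comap_le
  set W : Ω → E := fun ω => (G (Z ω))⁻¹ • h (Z ω)
  have hW : StronglyMeasurable[m] W :=
    (hG.inv.stronglyMeasurable.smul hh).comp_measurable (comap_measurable Z)
  have hΔW : (fun ω => (Δ ω / G (Z ω)) • h (Z ω)) = Δ • W := by
    ext1 ω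
    simp only [W, Pi.smul_apply', smul_smul, div_eq_mul_inv]
  rw [hΔW] at hint ⊢
  rw [← integral_condExp hm]
  calc ∫ ω, μ[Δ • W | m] ω ∂μ
      = ∫ ω, (μ[Δ | m] ω) • W ω ∂μ :=
        integral_congr_ae (condExp_smul_of_aestronglyMeasurable_right hΔ hint
          hW.aestronglyMeasurable)
    _ = ∫ ω, G (Z ω) • W ω ∂μ :=
        integral_congr_ae (by filter_upwards [hGΔ] with ω hω using by rw [hω])
    _ = ∫ ω, h (Z ω) ∂μ :=
        integral_congr_ae (by filter_upwards [hG0] with ω hω using by simp [W, smul_smul, hω])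

theorem integral_ite [CompleteSpace E] [IsFiniteMeasure μ] {q : Ω → Prop} [DecidablePred q]
    (hq : MeasurableSet {ω | q ω}) (x y : E) :
    ∫ ω, (if q ω then x else y) ∂μ = μ.real {ω | q ω} • x + μ.real {ω | ¬ q ω} • y := by
  have hsplit : (fun ω => if q ω then x else y)
      = fun ω => {ω | q ω}.indicator (fun _ => x) ω + {ω | ¬ q ω}.indicator (fun _ => y) ω := by
    ext1 ω
    by_cases hω : q ω <;> simp [hω]
  have hq' : MeasurableSet {ω | ¬ q ω} := hq.compl
  rw [hsplit, integral_add ((integrable_const x).indicator hq)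
    ((integrable_const y).indicator hq'), integral_indicator_const x hq,
    integral_indicator_const y hq']

theorem MeasureTheory.Integrable.ite_smul {g : Ω → E} (hg : Integrable g μ) {q : Ω → Prop}
    [DecidablePred q] (hq : MeasurableSet {ω | q ω}) (x y : ℝ) :
    Integrable (fun ω => (if q ω then x else y) • g ω) μ :=
  hg.bdd_smul (max ‖x‖ ‖y‖) (measurable_const.ite hq measurable_const).aestronglyMeasurable
    (ae_of_all _ fun ω => by split_ifs <;> simp only [le_max_left, le_max_right])

theorem MeasureTheory.Integrable.div_smul_of_le {H : Ω → E} (hH : Integrable H μ)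
    {Δ G : Ω → ℝ} {δ : ℝ} (hδ : 0 < δ) (hΔG : AEStronglyMeasurable (fun ω => Δ ω / G ω) μ)
    (hΔ : ∀ᵐ ω ∂μ, ‖Δ ω‖ ≤ 1) (hG : ∀ᵐ ω ∂μ, δ ≤ G ω) :
    Integrable (fun ω => (Δ ω / G ω) • H ω) μ := by
  refine hH.bdd_smul δ⁻¹ hΔG ?_
  filter_upwards [hΔ, hG] with ω hΔω hGω
  rw [norm_div, Real.norm_of_nonneg (hδ.trans_le hGω).le, ← one_div]
  exact div_le_div₀ zero_le_one hΔω hδ hGω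

theorem div_smul_eq_of_le_of_eq_min {Δ t c y : ℝ} (hΔ : Δ = if t ≤ c then 1 else 0)
    (hy : y = min t c) (φ : ℝ → ℝ) (ψ : ℝ → E) : (Δ / φ y) • ψ y = (Δ / φ t) • ψ t := by
  subst hΔ hy
  split_ifs with h
  · rw [min_eq_left h]
  · simp

theorem ProbabilityTheory.IndepFun.integral_ite_smul_eq_zero
    [IsProbabilityMeasure μ] {α γ : Type*} [MeasurableSpace α] [MeasurableSingletonClass α]
    [DecidableEq α] [MeasurableSpace γ] {A : Ω → α} {V : Ω → γ} (hAV : A ⟂ᵢ[μ] V)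
    (hA : Measurable A) (hV : Measurable V) {g : γ → E} (hg : StronglyMeasurable g) {a : α}
    {κ : ℝ} (hκ : μ.real {ω | A ω = a} = κ) (hκ0 : κ ≠ 0) (hκ1 : κ ≠ 1) {c₁ c₂ : ℝ}
    (hc : c₁ + c₂ = 0) :
    ∫ ω, (if A ω = a then c₁ / κ else c₂ / (1 - κ)) • g (V ω) ∂μ = 0 := by
  have hAa : MeasurableSet {ω | A ω = a} := hA (measurableSet_singleton a)
  have hκc : μ.real {ω | ¬ A ω = a} = 1 - κ := by
    rw [← hκ, ← probReal_compl_eq_one_sub hAa]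
    rfl
  have hite : Measurable fun b : α => if b = a then c₁ / κ else c₂ / (1 - κ) :=
    measurable_const.ite (measurableSet_singleton a) measurable_const
  rw [hAV.integral_fun_comp_smul_comp (f := fun b => if b = a then c₁ / κ else c₂ / (1 - κ))
      hA.aemeasurable hV.aemeasurable hite.aestronglyMeasurable hg.aestronglyMeasurable,
    integral_ite hAa, hκ, hκc, smul_eq_mul, smul_eq_mul, mul_div_cancel₀ _ hκ0,
    mul_div_cancel₀ _ (sub_ne_zero.2 hκ1.symm), hc, zero_smul]

end

theorem app_score_unbiased_at_beta0_general
    {Ω : Type*} [MeasurableSpace Ω] (P : Measure Ω) [IsProbabilityMeasure P]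
    {K p : ℕ} (X : Ω → (Fin p → ℝ)) (T C : Ω → ℝ) (A : Ω → Fin (K + 1))
    (hX : Measurable X) (hT : Measurable T) (hC : Measurable C) (hA : Measurable A)
    (M : ℝ) (hXbd : ∀ ω i, |X ω i| ≤ M)
    (hlogT : Integrable (fun ω => Real.log (T ω)) P)
    (Δ : Ω → ℝ) (hΔ : ∀ ω, Δ ω = if T ω ≤ C ω then (1 : ℝ) else 0)
    (Y : Ω → ℝ) (hY : ∀ ω, Y ω = min (T ω) (C ω))
    (G : ℝ × (Fin p → ℝ) → ℝ) (hG : Measurable G)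
    (δ : ℝ) (hδ : 0 < δ)
    (hGbound : ∀ᵐ ω ∂P, δ ≤ G (T ω, X ω) ∧ G (T ω, X ω) ≤ 1)
    (hGcond : (fun ω => G (T ω, X ω))
      =ᵐ[P] P[Δ | MeasurableSpace.comap (fun ω => (T ω, X ω)) inferInstance])
    (hindep : IndepFun A X P)
    (a : Fin (K + 1)) (κ : ℝ) (hκ : κ = (P {ω | A ω = a}).toReal)
    (hκpos : 0 < κ) (hκlt : κ < 1)
    (Sig : Matrix (Fin p) (Fin p) ℝ) (hSig : ∀ i j, Sig i j = ∫ ω, X ω i * X ω j ∂P)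
    (hSigInv : IsUnit Sig)
    (v : Fin p → ℝ) (hv : ∀ i, v i = ∫ ω, X ω i * Real.log (T ω) ∂P)
    (β₀ : Fin p → ℝ) (hβ₀ : β₀ = Sig⁻¹.mulVec v)
    (c₁ c₂ : ℝ) (hc : c₁ + c₂ = 0)
    (f : (Fin p → ℝ) → ℝ) (hf : Measurable f) (Mf : ℝ) (hfbd : ∀ x, |f x| ≤ Mf) :
    ∫ ω, ((Δ ω / G (Y ω, X ω)) • ((Real.log (Y ω) - ∑ i, X ω i * β₀ i) • X ω)
          + (c₁ * (if A ω = a then (1 : ℝ) else 0) / κ) •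
              ((f (X ω) - ∑ i, X ω i * β₀ i) • X ω)
          + (c₂ * (if A ω = a then (0 : ℝ) else 1) / (1 - κ)) •
              ((f (X ω) - ∑ i, X ω i * β₀ i) • X ω)) ∂P = 0 := by
  have hXnorm : ∀ ω, ‖X ω‖ ≤ max M 0 := fun ω =>
    (pi_norm_le_iff_of_nonneg (le_max_right M 0)).mpr fun i => (hXbd ω i).trans (le_max_left M 0)
  have hΔm : Measurable Δ := by
    rw [funext hΔ]
    exact measurable_const.ite (measurableSet_le hT hC) measurable_const
  have hΔnorm : ∀ ω, ‖Δ ω‖ ≤ 1 := fun ω => by rw [hΔ]; split_ifs <;> simp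
  have hipcw_int := (integrable_sub_sum_mul_smul hX hXnorm hlogT β₀).div_smul_of_le
    (G := fun ω => G (T ω, X ω)) hδ (hΔm.div (hG.comp (hT.prodMk hX))).aestronglyMeasurable
    (ae_of_all _ hΔnorm) (hGbound.mono fun _ h => h.1)
  have hfX : Integrable (fun ω => f (X ω)) P :=
    .of_bound (hf.comp hX).aestronglyMeasurable Mf (ae_of_all _ fun ω => hfbd (X ω))
  have hpred_int := (integrable_sub_sum_mul_smul hX hXnorm hfX β₀).ite_smul
    (q := fun ω => A ω = a) (hA (measurableSet_singleton a)) (c₁ / κ) (c₂ / (1 - κ))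
  calc _ = ∫ ω, (Δ ω / G (T ω, X ω)) • ((Real.log (T ω) - ∑ i, X ω i * β₀ i) • X ω)
          + (if A ω = a then c₁ / κ else c₂ / (1 - κ)) •
              ((f (X ω) - ∑ i, X ω i * β₀ i) • X ω) ∂P := by
        refine integral_congr_ae (ae_of_all _ fun ω => ?_)
        dsimp only
        rw [div_smul_eq_of_le_of_eq_min (hΔ ω) (hY ω) (fun y => G (y, X ω))
          fun y => (Real.log y - ∑ i, X ω i * β₀ i) • X ω, add_assoc, ← add_smul]
        split_ifs <;> simp
    _ = ∫ ω, (Real.log (T ω) - ∑ i, X ω i * β₀ i) • X ω ∂P + 0 := by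
        rw [integral_add hipcw_int hpred_int, integral_div_smul_eq_of_condExp_comap
            (h := fun q : ℝ × (Fin p → ℝ) => (Real.log q.1 - ∑ i, q.2 i * β₀ i) • q.2)
            (hT.prodMk hX) hG (by fun_prop : Measurable _).stronglyMeasurable
            (.of_bound hΔm.aestronglyMeasurable 1 (ae_of_all _ hΔnorm)) hGcond
            (hGbound.mono fun ω hω => (hδ.trans_le hω.1).ne') hipcw_int,
          hindep.integral_ite_smul_eq_zero (g := fun x => (f x - ∑ i, x i * β₀ i) • x) hA hX
            (by fun_prop : Measurable _).stronglyMeasurable hκ.symm hκpos.ne' hκlt.ne hc]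
    _ = 0 := by
        rw [add_zero, hβ₀]
        exact integral_sub_sum_mul_smul_eq_zero hX hXnorm hlogT hSig hSigInv hv

/-- **Population unbiasedness of the APP score at the true coefficient under debiasing
weights.** With right-censored data `Δ = 1{T ≤ C}`, `Y = min(T, C)`, censoring mechanism `G`
(a version of `E[Δ ∣ σ(T, X)]`, bounded below by `δ > 0`), a bounded covariate vector `X` with
invertible second moment matrix `Σ = E[XXᵀ]`, a treatment `A` independent of `X` with
`κ = P(A = a) ∈ (0, 1)`, and population least-squares coefficient `β₀ = Σ⁻¹ E[X log T]`:
for all weights with `c₁ + c₂ = 0` and every bounded measurable `f`, the APP score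
`ψ(β₀, f) = (XΔ/G(Y,X))(log Y − Xᵀβ₀) + c₁ (1{A=a}/κ) X (f(X) − Xᵀβ₀)
   + c₂ (1{A≠a}/(1−κ)) X (f(X) − Xᵀβ₀)` has mean zero. -/
theorem app_score_unbiased_at_beta0
    {Ω : Type*} [MeasurableSpace Ω] (P : Measure Ω) [IsProbabilityMeasure P]
    {K p : ℕ} (X : Ω → (Fin p → ℝ)) (T C : Ω → ℝ) (A : Ω → Fin (K + 1))
    (hX : Measurable X) (hT : Measurable T) (hC : Measurable C) (hA : Measurable A)
    (M : ℝ) (hXbd : ∀ ω i, |X ω i| ≤ M)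
    (hTpos : ∀ᵐ ω ∂P, 0 < T ω) (hCpos : ∀ᵐ ω ∂P, 0 < C ω)
    (hlogT : Integrable (fun ω => Real.log (T ω)) P)
    (Δ : Ω → ℝ) (hΔ : ∀ ω, Δ ω = if T ω ≤ C ω then (1 : ℝ) else 0)
    (Y : Ω → ℝ) (hY : ∀ ω, Y ω = min (T ω) (C ω))
    (G : ℝ × (Fin p → ℝ) → ℝ) (hG : Measurable G)
    (δ : ℝ) (hδ : 0 < δ)
    (hGbound : ∀ᵐ ω ∂P, δ ≤ G (T ω, X ω) ∧ G (T ω, X ω) ≤ 1)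
    (hGcond : (fun ω => G (T ω, X ω))
      =ᵐ[P] P[Δ | MeasurableSpace.comap (fun ω => (T ω, X ω)) inferInstance])
    (hindep : IndepFun A X P)
    (a : Fin (K + 1)) (κ : ℝ) (hκ : κ = (P {ω | A ω = a}).toReal)
    (hκpos : 0 < κ) (hκlt : κ < 1)
    (Sig : Matrix (Fin p) (Fin p) ℝ) (hSig : ∀ i j, Sig i j = ∫ ω, X ω i * X ω j ∂P)
    (hSigInv : IsUnit Sig)
    (v : Fin p → ℝ) (hv : ∀ i, v i = ∫ ω, X ω i * Real.log (T ω) ∂P)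
    (β₀ : Fin p → ℝ) (hβ₀ : β₀ = Sig⁻¹.mulVec v)
    (c₁ c₂ : ℝ) (hc : c₁ + c₂ = 0)
    (f : (Fin p → ℝ) → ℝ) (hf : Measurable f) (Mf : ℝ) (hfbd : ∀ x, |f x| ≤ Mf) :
    ∫ ω, ((Δ ω / G (Y ω, X ω)) • ((Real.log (Y ω) - ∑ i, X ω i * β₀ i) • X ω)
          + (c₁ * (if A ω = a then (1 : ℝ) else 0) / κ) •
              ((f (X ω) - ∑ i, X ω i * β₀ i) • X ω)
          + (c₂ * (if A ω = a then (0 : ℝ) else 1) / (1 - κ)) •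
              ((f (X ω) - ∑ i, X ω i * β₀ i) • X ω)) ∂P = 0 :=
  app_score_unbiased_at_beta0_general P X T C A hX hT hC hA M hXbd hlogT Δ hΔ Y hY G hG δ hδ hGbound
    hGcond hindep a κ hκ hκpos hκlt Sig hSig hSigInv v hv β₀ hβ₀ c₁ c₂ hc f hf Mf hfbd
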